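/- Let 1 ≤ p < ∞ and define the sequence x = (x_k)_{k∈ℤ} by x_k = |k|^{−1/p} for k ≠ 0 and x_0 = 1. Then x is not p-summable, but for every m ∈ ℤ, N ∈ ℕ, and γ > 0, one has γ · |{k ∈ S_{m,N} : |x_k| > γ}|^{1/p} ≤ 3; in particular ‖x‖_{wℓ^p_p} ≤ 3, so x belongs to the weak type discrete Morrey space wℓ^p_p, and the inclusion ℓ^p ⊆ wℓ^p_p is strict. -/

import Mathlib

open scoped ENNReal NNReal BigOperators

/-- The discrete "ball" `S_{m,N} = {m-N, …, m+N}` as a finite set of integers. -/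
noncomputable def S (m : ℤ) (N : ℕ) : Finset ℤ := Finset.Icc (m - N) (m + N)

open Classical in
/-- The cardinality of `{k ∈ S_{m,N} : |x_k| > γ}`. -/
noncomputable def weakCard (x : ℤ → ℂ) (m : ℤ) (N : ℕ) (γ : ℝ≥0) : ℕ :=
  ((S m N).filter (fun k => γ < ‖x k‖₊)).card

/-- The weak type discrete Morrey norm `‖x‖_{wℓ^p_q}`. -/
noncomputable def wMorreyNorm (p q : ℝ) (x : ℤ → ℂ) : ℝ≥0∞ :=
  ⨆ (m : ℤ) (N : ℕ) (γ : ℝ≥0) (_ : 0 < γ),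
    (2 * (N : ℝ≥0∞) + 1) ^ (1 / q - 1 / p) * (γ : ℝ≥0∞) *
      (weakCard x m N γ : ℝ≥0∞) ^ (1 / p)

/-! Writing `‖x_k‖ = max(1, |k|)^(-1/p)` covers `k = 0` too. Then `γ < ‖x_k‖` forces
`|k| < γ^(-p)`, wherever the window `S_{m,N}` lies, so at most `2γ^(-p) + 1 ≤ 3γ^(-p)` indices
count when `γ < 1` (none when `γ ≥ 1`), and `γ (3γ^(-p))^(1/p) = 3^(1/p) ≤ 3`. On the other hand
`‖x_k‖^p = 1/|k|` for `k ≠ 0` is the harmonic series. -/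

open Finset

section
variable {p : ℝ} {x : ℤ → ℂ}

lemma norm_eq_max_one_abs_rpow
    (hx : ∀ k : ℤ, x k = if k = 0 then 1 else ((|(k : ℝ)| ^ (-(1 / p)) : ℝ) : ℂ)) (k : ℤ) :
    ‖x k‖ = max 1 |(k : ℝ)| ^ (-(1 / p)) := by
  rw [hx k]
  split_ifs with hk
  · simp [hk]
  · have : (1 : ℝ) ≤ |(k : ℝ)| := by exact_mod_cast Int.one_le_abs hk
    rw [max_eq_right this, Complex.norm_real, Real.norm_of_nonneg (by positivity)]

lemma natAbs_lt_rpow_neg_of_lt {γ : ℝ} {k : ℤ} (hp : 0 < p) (hγ : 0 < γ)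
    (h : γ < max 1 |(k : ℝ)| ^ (-(1 / p))) : (k.natAbs : ℝ) < γ ^ (-p) := by
  have hmax : 0 ≤ max 1 |(k : ℝ)| := zero_le_one.trans (le_max_left _ _)
  calc (k.natAbs : ℝ) = |(k : ℝ)| := by rw [Nat.cast_natAbs, Int.cast_abs]
    _ ≤ max 1 |(k : ℝ)| := le_max_right _ _
    _ = (max 1 |(k : ℝ)| ^ (-(1 / p))) ^ (-p) := by
      rw [← Real.rpow_mul hmax, neg_mul_neg, one_div_mul_cancel hp.ne', Real.rpow_one]
    _ < γ ^ (-p) := Real.rpow_lt_rpow_of_neg hγ h (neg_neg_of_pos hp)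

lemma weakCard_le_two_mul_floor_add_one (hp : 0 < p)
    (hx : ∀ k : ℤ, ‖x k‖ ≤ max 1 |(k : ℝ)| ^ (-(1 / p))) (m : ℤ) (N : ℕ) {γ : ℝ≥0} (hγ : 0 < γ) :
    weakCard x m N γ ≤ 2 * ⌊(γ : ℝ) ^ (-p)⌋₊ + 1 := by
  set M := ⌊(γ : ℝ) ^ (-p)⌋₊
  have hsub : (S m N).filter (fun k => γ < ‖x k‖₊) ⊆ Icc (-(M : ℤ)) M := by
    intro k hk
    have hlt : (k.natAbs : ℝ) < (γ : ℝ) ^ (-p) :=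
      natAbs_lt_rpow_neg_of_lt hp hγ (lt_of_lt_of_le (mem_filter.1 hk).2 (hx k))
    have := Nat.le_floor hlt.le
    rw [mem_Icc]
    omega
  calc weakCard x m N γ ≤ #(Icc (-(M : ℤ)) M) := card_le_card hsub
    _ = 2 * M + 1 := by rw [Int.card_Icc]; omega

lemma weakCard_eq_zero_of_one_le (hp : 0 < p)
    (hx : ∀ k : ℤ, ‖x k‖ ≤ max 1 |(k : ℝ)| ^ (-(1 / p))) (m : ℤ) (N : ℕ) {γ : ℝ≥0} (hγ : 1 ≤ γ) :
    weakCard x m N γ = 0 := by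
  rw [weakCard, card_eq_zero, filter_eq_empty_iff]
  intro k _
  rw [not_lt, ← NNReal.coe_le_coe, coe_nnnorm]
  calc ‖x k‖ ≤ max 1 |(k : ℝ)| ^ (-(1 / p)) := hx k
    _ ≤ 1 := Real.rpow_le_one_of_one_le_of_nonpos (le_max_left _ _)
        (neg_nonpos.2 (one_div_pos.2 hp).le)
    _ ≤ γ := hγ

lemma coe_mul_weakCard_rpow_le_three (hp : 1 ≤ p)
    (hx : ∀ k : ℤ, ‖x k‖ ≤ max 1 |(k : ℝ)| ^ (-(1 / p))) (m : ℤ) (N : ℕ) {γ : ℝ≥0} (hγ : 0 < γ) :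
    (γ : ℝ) * (weakCard x m N γ : ℝ) ^ (1 / p) ≤ 3 := by
  have hp0 : 0 < p := zero_lt_one.trans_le hp
  rcases le_or_gt 1 γ with hγ1 | hγ1
  · rw [weakCard_eq_zero_of_one_le hp0 hx m N hγ1, Nat.cast_zero,
      Real.zero_rpow (one_div_pos.2 hp0).ne', mul_zero]
    norm_num
  set r := (γ : ℝ) ^ (-p)
  have hr : 1 ≤ r := Real.one_le_rpow_of_pos_of_le_one_of_nonpos hγ hγ1.le (by linarith)
  have hcard : (weakCard x m N γ : ℝ) ≤ 3 * r := by
    have h := weakCard_le_two_mul_floor_add_one hp0 hx m N hγ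
    have : (⌊r⌋₊ : ℝ) ≤ r := Nat.floor_le (by linarith)
    have : (weakCard x m N γ : ℝ) ≤ 2 * ⌊r⌋₊ + 1 := by exact_mod_cast h
    linarith
  have hγr : (γ : ℝ) * r ^ (1 / p) = 1 := by
    rw [← Real.rpow_mul (NNReal.coe_nonneg γ), neg_mul, mul_one_div_cancel hp0.ne',
      Real.rpow_neg_one, mul_inv_cancel₀ (NNReal.coe_pos.2 hγ).ne']
  calc (γ : ℝ) * (weakCard x m N γ : ℝ) ^ (1 / p)
      ≤ (γ : ℝ) * (3 * r) ^ (1 / p) := by gcongr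
    _ = (3 : ℝ) ^ (1 / p) := by
      rw [Real.mul_rpow (by norm_num) (by linarith), mul_left_comm, hγr, mul_one]
    _ ≤ 3 ^ (1 : ℝ) := Real.rpow_le_rpow_of_exponent_le (by norm_num)
        ((div_le_one hp0).2 hp)
    _ = 3 := Real.rpow_one 3

lemma not_summable_norm_rpow (hp : 0 < p) (hx : ∀ k : ℤ, max 1 |(k : ℝ)| ^ (-(1 / p)) ≤ ‖x k‖) :
    ¬ Summable fun k : ℤ => ‖x k‖ ^ p := by
  intro hs
  refine Real.not_summable_natCast_inv
    ((hs.comp_injective Nat.cast_injective).of_nonneg_of_le (fun n => by positivity) fun n => ?_)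
  have hmax : 0 < max 1 |((n : ℤ) : ℝ)| := zero_lt_one.trans_le (le_max_left _ _)
  calc (n : ℝ)⁻¹ ≤ (max 1 |((n : ℤ) : ℝ)|)⁻¹ := by
        rcases n.eq_zero_or_pos with rfl | hn
        · simp
        · gcongr; simpa [max_le_iff, Nat.one_le_iff_ne_zero] using hn.ne'
    _ = (max 1 |((n : ℤ) : ℝ)| ^ (-(1 / p))) ^ p := by
        rw [← Real.rpow_mul hmax.le, neg_mul, one_div_mul_cancel hp.ne', Real.rpow_neg_one]
    _ ≤ ‖x n‖ ^ p := by gcongr; exact hx n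

lemma wMorreyNorm_self_le (hp : 0 ≤ p) {C : ℝ≥0}
    (h : ∀ (m : ℤ) (N : ℕ) (γ : ℝ≥0), 0 < γ → (γ : ℝ) * (weakCard x m N γ : ℝ) ^ (1 / p) ≤ C) :
    wMorreyNorm p p x ≤ C := by
  refine iSup_le fun m => iSup_le fun N => iSup_le fun γ => iSup_le fun hγ => ?_
  rw [sub_self, ENNReal.rpow_zero, one_mul, ← ENNReal.coe_natCast,
    ← ENNReal.coe_rpow_of_nonneg _ (one_div_nonneg.2 hp), ← ENNReal.coe_mul, ENNReal.coe_le_coe,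
    ← NNReal.coe_le_coe, NNReal.coe_mul, NNReal.coe_rpow, NNReal.coe_natCast]
  exact h m N γ hγ

end

theorem stmt6 (p : ℝ) (hp : 1 ≤ p) (x : ℤ → ℂ)
    (hx : ∀ k : ℤ, x k = if k = 0 then 1 else ((|(k : ℝ)| ^ (-(1 / p)) : ℝ) : ℂ)) :
    (¬ Summable fun k : ℤ => ‖x k‖ ^ p) ∧
    (∀ (m : ℤ) (N : ℕ) (γ : ℝ≥0), 0 < γ →
      (γ : ℝ) * (weakCard x m N γ : ℝ) ^ (1 / p) ≤ 3) ∧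
    wMorreyNorm p p x ≤ 3 := by
  have hp0 : 0 < p := zero_lt_one.trans_le hp
  have hnorm := norm_eq_max_one_abs_rpow hx
  have hweak : ∀ (m : ℤ) (N : ℕ) (γ : ℝ≥0), 0 < γ →
      (γ : ℝ) * (weakCard x m N γ : ℝ) ^ (1 / p) ≤ 3 :=
    fun m N _ hγ => coe_mul_weakCard_rpow_le_three hp (fun k => (hnorm k).le) m N hγ
  exact ⟨not_summable_norm_rpow hp0 fun k => (hnorm k).ge, hweak,
    wMorreyNorm_self_le hp0.le (C := 3) hweak⟩
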